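/- Let h, G : ℂ → ℂ be entire functions such that G(k) ≠ 0 and h(k) ≠ 0 for every k with Im k ≥ 0, and such that h(k)·G(−k) = h(−k)·G(k) for every real k. Suppose that for every ε > 0 there exists r > 0 such that |h(k) − G(k)| ≤ ε·|G(k)| whenever Im k ≥ 0 and |k| ≥ r. Then h(k) = G(k) for every k ∈ ℂ. -/

import Mathlib

open Complex Filter Set Topology

/-- An entire function vanishing on the reals vanishes everywhere. -/
lemma entire_zero_of_real_zero (f : ℂ → ℂ) (hf : Differentiable ℂ f)
    (hr : ∀ x : ℝ, f x = 0) : ∀ k : ℂ, f k = 0 := by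
  have hA : AnalyticOnNhd ℂ f Set.univ := hf.differentiableOn.analyticOnNhd isOpen_univ
  have hu : Filter.Tendsto (fun n : ℕ => ((1 / (n + 1) : ℝ) : ℂ)) Filter.atTop (𝓝[≠] (0 : ℂ)) := by
    rw [tendsto_nhdsWithin_iff]
    constructor
    · have h1 : Filter.Tendsto (fun n : ℕ => 1 / ((n : ℝ) + 1)) Filter.atTop (𝓝 0) :=
        tendsto_one_div_add_atTop_nhds_zero_nat
      have h2 : Filter.Tendsto (fun n : ℕ => ((1 / (n + 1) : ℝ) : ℂ)) Filter.atTop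
          (𝓝 ((0 : ℝ) : ℂ)) := (Complex.continuous_ofReal.tendsto (0 : ℝ)).comp h1
      simpa using h2
    · filter_upwards with n
      simp only [Set.mem_compl_iff, Set.mem_singleton_iff, Complex.ofReal_eq_zero]
      positivity
  have hfreq : ∃ᶠ z in 𝓝[≠] (0 : ℂ), f z = 0 :=
    hu.frequently (Filter.Frequently.of_forall fun n => hr _)
  intro k
  exact hA.eqOn_zero_of_preconnected_of_frequently_eq_zero isPreconnected_univ
    (Set.mem_univ 0) hfreq (Set.mem_univ k)

/-- Liouville-type lemma underlying case (iii) of Section 4. -/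
theorem liouville_uniqueness_equal
    (h G : ℂ → ℂ) (hh : Differentiable ℂ h) (hG : Differentiable ℂ G)
    (hGne : ∀ k : ℂ, 0 ≤ k.im → G k ≠ 0)
    (hhne : ∀ k : ℂ, 0 ≤ k.im → h k ≠ 0)
    (hfe : ∀ x : ℝ, h x * G (-(x : ℂ)) = h (-(x : ℂ)) * G x)
    (hbd : ∀ ε : ℝ, 0 < ε → ∃ r : ℝ, 0 < r ∧ ∀ k : ℂ, 0 ≤ k.im →
      r ≤ ‖k‖ → ‖h k - G k‖ ≤ ε * ‖G k‖) :
    ∀ k : ℂ, h k = G k := by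
  set D : ℂ → ℂ := fun k => h k - G k with hDdef
  have hD : Differentiable ℂ D := hh.sub hG
  -- extend the functional equation to all of ℂ
  have hfeC : ∀ k : ℂ, h k * G (-k) = h (-k) * G k := by
    intro k
    have := entire_zero_of_real_zero (fun k => h k * G (-k) - h (-k) * G k)
      ((hh.mul (hG.comp differentiable_neg)).sub
        ((hh.comp differentiable_neg).mul hG))
      (fun x => by rw [sub_eq_zero]; exact hfe x) k
    exact sub_eq_zero.mp this
  -- hence for D
  have hDfe : ∀ k : ℂ, D k * G (-k) = D (-k) * G k := by
    intro k
    simp only [hDdef]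
    have := hfeC k
    ring_nf
    ring_nf at this
    linear_combination this
  -- the glued quotient
  set Q : ℂ → ℂ := fun k => if 0 ≤ k.im then D k / G k else D (-k) / G (-k) with hQdef
  have hQdiff : Differentiable ℂ Q := by
    intro k
    rcases lt_trichotomy k.im 0 with hk | hk | hk
    · -- lower half plane
      have hopen : IsOpen {z : ℂ | z.im < 0} := by
        exact isOpen_lt Complex.continuous_im continuous_const
      have hmem : {z : ℂ | z.im < 0} ∈ 𝓝 k := hopen.mem_nhds hk
      have heq : Q =ᶠ[𝓝 k] fun z => D (-z) / G (-z) := by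
        filter_upwards [hmem] with z hz
        simp only [hQdef, if_neg (not_le.mpr hz)]
      have hd : DifferentiableAt ℂ (fun z => D (-z) / G (-z)) k := by
        have hne : G (-k) ≠ 0 := hGne _ (by simp [Complex.neg_im]; linarith)
        exact ((hD.comp differentiable_neg).differentiableAt).div
          ((hG.comp differentiable_neg).differentiableAt) hne
      exact hd.congr_of_eventuallyEq heq
    · -- real axis: locally Q = (D * G ∘ neg) / (G * G ∘ neg)
      have hGk : G k ≠ 0 := hGne _ (le_of_eq hk.symm)
      have hGnk : G (-k) ≠ 0 := hGne _ (by simp [Complex.neg_im, hk])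
      have hopen : IsOpen {z : ℂ | G z ≠ 0 ∧ G (-z) ≠ 0} := by
        have h1 : IsOpen {z : ℂ | G z ≠ 0} := isOpen_ne_fun hG.continuous continuous_const
        have h2 : IsOpen {z : ℂ | G (-z) ≠ 0} :=
          isOpen_ne_fun (hG.continuous.comp continuous_neg) continuous_const
        exact h1.inter h2
      have hmem : {z : ℂ | G z ≠ 0 ∧ G (-z) ≠ 0} ∈ 𝓝 k := hopen.mem_nhds ⟨hGk, hGnk⟩
      have heq : Q =ᶠ[𝓝 k] fun z => (D z * G (-z)) / (G z * G (-z)) := by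
        filter_upwards [hmem] with z hz
        rcases hz with ⟨hz1, hz2⟩
        by_cases hzi : 0 ≤ z.im
        · simp only [hQdef, if_pos hzi]
          field_simp
        · simp only [hQdef, if_neg hzi]
          rw [hDfe z]
          field_simp
      have hd : DifferentiableAt ℂ (fun z => (D z * G (-z)) / (G z * G (-z))) k := by
        refine DifferentiableAt.div ?_ ?_ (mul_ne_zero hGk hGnk)
        · exact (hD.differentiableAt).mul ((hG.comp differentiable_neg).differentiableAt)
        · exact (hG.differentiableAt).mul ((hG.comp differentiable_neg).differentiableAt)
      exact hd.congr_of_eventuallyEq heq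
    · -- upper half plane
      have hopen : IsOpen {z : ℂ | 0 < z.im} := isOpen_lt continuous_const Complex.continuous_im
      have hmem : {z : ℂ | 0 < z.im} ∈ 𝓝 k := hopen.mem_nhds hk
      have heq : Q =ᶠ[𝓝 k] fun z => D z / G z := by
        filter_upwards [hmem] with z hz
        simp only [hQdef, if_pos (le_of_lt hz)]
      have hd : DifferentiableAt ℂ (fun z => D z / G z) k :=
        (hD.differentiableAt).div (hG.differentiableAt) (hGne _ (le_of_lt hk))
      exact hd.congr_of_eventuallyEq heq
  -- decay of Q at infinity
  have hQsmall : ∀ ε : ℝ, 0 < ε → ∃ r : ℝ, 0 < r ∧ ∀ k : ℂ,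
      r ≤ ‖k‖ → ‖Q k‖ ≤ ε := by
    intro ε hε
    obtain ⟨r, hr, hb⟩ := hbd ε hε
    refine ⟨r, hr, fun k hk => ?_⟩
    by_cases hki : 0 ≤ k.im
    · have hGk : G k ≠ 0 := hGne _ hki
      have := hb k hki hk
      simp only [hQdef, if_pos hki, norm_div]
      rw [div_le_iff₀ (norm_pos_iff.mpr hGk)]
      exact this
    · have hki' : 0 ≤ (-k).im := by simp [Complex.neg_im]; linarith [not_le.mp hki]
      have hGk : G (-k) ≠ 0 := hGne _ hki'
      have := hb (-k) hki' (by simpa using hk)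
      simp only [hQdef, if_neg hki, norm_div]
      rw [div_le_iff₀ (norm_pos_iff.mpr hGk)]
      exact this
  -- Q is bounded
  have hQbdd : Bornology.IsBounded (Set.range Q) := by
    obtain ⟨r, hr, hb⟩ := hQsmall 1 one_pos
    have hcomp : IsCompact (Metric.closedBall (0 : ℂ) r) := isCompact_closedBall _ _
    obtain ⟨C, hC⟩ := hcomp.exists_bound_of_continuousOn hQdiff.continuous.continuousOn
    rw [Metric.isBounded_iff_subset_closedBall 0]
    refine ⟨max C 1, ?_⟩
    rintro _ ⟨k, rfl⟩
    simp only [Metric.mem_closedBall, dist_zero_right]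
    by_cases hk : ‖k‖ ≤ r
    · have := hC k (by simpa [Metric.mem_closedBall, dist_zero_right] using hk)
      exact le_trans this (le_max_left _ _)
    · have := hb k (le_of_not_ge hk)
      exact le_trans this (le_max_right _ _)
  -- Liouville: Q is constant, and the constant is 0
  have hQzero : ∀ k : ℂ, Q k = 0 := by
    intro k
    have habs : ∀ ε : ℝ, 0 < ε → ‖Q k‖ ≤ ε := by
      intro ε hε
      obtain ⟨r, hr, hb⟩ := hQsmall ε hε
      have hconst := hQdiff.apply_eq_apply_of_bounded hQbdd k ((r : ℂ))
      rw [hconst]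
      exact hb _ (by simp [abs_of_pos hr])
    have : ‖Q k‖ = 0 := by
      by_contra hne
      have hpos : 0 < ‖Q k‖ := lt_of_le_of_ne (norm_nonneg _) (Ne.symm hne)
      have := habs (‖Q k‖ / 2) (by positivity)
      linarith
    simpa using this
  -- conclude on the reals, then everywhere
  have hreal : ∀ x : ℝ, D x = 0 := by
    intro x
    have hQx := hQzero x
    have hxi : (0 : ℝ) ≤ (x : ℂ).im := by simp
    simp only [hQdef, if_pos hxi] at hQx
    exact (div_eq_zero_iff.mp hQx).resolve_right (hGne _ hxi)
  have := entire_zero_of_real_zero D hD hreal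
  intro k
  have hk := this k
  simpa [hDdef, sub_eq_zero] using hk
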